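/- Let p be a prime, n ≥ 1, and let A ⊆ (ZMod p)^n be 𝓔-compressed. Let h be the maximal index such that the subgroup H = span{e₁, …, e_h} is contained in A, assume m := n − h ≥ 1, and set a_i = e_{h+i} for i ∈ {1, …, m}. Let q ∈ {1, …, p−1} be maximal such that A ∩ (q·a₁ + H) is nonempty, let A₁ = A ∩ (q·a₁ + H), and let A_i = A ∩ (a_i + H) for i ∈ {2, …, m}. Then A = H ∪ (a₁ + H) ∪ (2a₁ + H) ∪ … ∪ ((q−1)a₁ + H) ∪ A₁ ∪ A₂ ∪ … ∪ A_m. -/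

import Mathlib

open Pointwise

/-- `u ≺ v` in the lexicographic order: `u i < v i` (as values in `{0,…,p-1}`)
at the largest coordinate `i` where `u` and `v` differ. -/
def lexLt {n p : ℕ} (u v : Fin n → ZMod p) : Prop :=
  ∃ i : Fin n, (u i).val < (v i).val ∧ ∀ j : Fin n, i < j → u j = v j

/-- The `v`-line through `u`: `L_v^u = {u + k•v : k ∈ ZMod p}`. -/
def line {n p : ℕ} (v u : Fin n → ZMod p) : Set (Fin n → ZMod p) :=
  {x | ∃ k : ZMod p, x = u + k • v}

/-- `IS k L`: the set of the `k` lexicographically smallest elements of `L`. -/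
def IS {n p : ℕ} (k : ℕ) (L : Set (Fin n → ZMod p)) : Set (Fin n → ZMod p) :=
  {x | x ∈ L ∧ ({y | y ∈ L ∧ lexLt y x}).ncard < k}

/-- The `v`-compression of `A`: on each `v`-line `L`, replace `A ∩ L` by the
initial segment of `L` of the same cardinality. -/
def comp {n p : ℕ} (v : Fin n → ZMod p) (A : Set (Fin n → ZMod p)) :
    Set (Fin n → ZMod p) :=
  ⋃ u : Fin n → ZMod p, IS (A ∩ line v u).ncard (line v u)

/-- `E = {0, e₁, …, e_n}`: zero together with the standard basis. -/
def stdE (n p : ℕ) : Set (Fin n → ZMod p) :=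
  {0} ∪ Set.range (fun i : Fin n => Pi.single i (1 : ZMod p))

/-- `A` is `𝓔`-compressed: `E ⊆ A` and `A` is `v`-compressed for every nonzero `v`
whose compression keeps `E` inside the set. -/
def ECompressed {n p : ℕ} (A : Set (Fin n → ZMod p)) : Prop :=
  stdE n p ⊆ A ∧
    ∀ v : Fin n → ZMod p, v ≠ 0 → stdE n p ⊆ comp v A → comp v A = A

/-- The subgroup spanned by the first `h` standard basis vectors `e_1, ..., e_h`. -/
def spanE (p n h : ℕ) : AddSubgroup (Fin n → ZMod p) :=
  AddSubgroup.closure {x | ∃ j : Fin n, (j : ℕ) < h ∧ x = Pi.single j 1}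

/-!
If `u ∈ A` lies in `span{e₁, …, e_{j-1}}`, the direction `v = e_j - u` keeps `E` inside
`C_v(A)`, so `A` is `v`-compressed. Along a `v`-line the lexicographic order is the order of the
`j`-th coordinate, hence `A` is closed under `x ↦ x - s•v` for `s ≤ x_j`. With `u = 0` this
lowers any coordinate of an element of `A`; with `s = 1` it shows that `e_j + y ∈ A`, for
`y ∈ span{e₁, …, e_{j-1}}`, makes `A ∩ span{e₁, …, e_{j-1}}` invariant under translation by `y`.

For `y ∈ span{e₁, …, e_{h+1}} \ H` that invariance would put `span{e₁, …, e_{h+1}}` inside `A`,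
against the maximality of `h`. So peeling the top coordinate off an element of `A` outside
`span{e₁, …, e_{h+1}}` leaves an element of `H` and a top coefficient `1`. Inside
`span{e₁, …, e_{h+1}}`, moving one element of `A ∩ (q·a₁ + H)` along `e_{h+1} - u` with `u ∈ H`
fills every coset `k·a₁ + H` with `k < q`, and the maximality of `q` excludes the cosets above.
-/

section

variable {n p : ℕ}

theorem mem_spanE {h : ℕ} {x : Fin n → ZMod p} :
    x ∈ spanE p n h ↔ ∀ l : Fin n, h ≤ l → x l = 0 := by
  have hpi : spanE p n h = AddSubgroup.pi {l : Fin n | h ≤ (l : ℕ)} fun _ => ⊥ := by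
    refine le_antisymm ((AddSubgroup.closure_le _).2 ?_) fun x hx => ?_
    · rintro _ ⟨j, hj, rfl⟩ l (hl : h ≤ (l : ℕ))
      simp [Pi.single_eq_of_ne (show l ≠ j by omega)]
    · rw [← Finset.univ_sum_single x]
      refine AddSubgroup.sum_mem _ fun l _ => ?_
      by_cases hl : h ≤ (l : ℕ)
      · simp [AddSubgroup.mem_bot.1 (hx l hl)]
      · obtain ⟨z, hz⟩ := ZMod.intCast_surjective (x l)
        have hgen : (Pi.single l 1 : Fin n → ZMod p) ∈ spanE p n h :=
          AddSubgroup.subset_closure ⟨l, by omega, rfl⟩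
        rw [← hz, ← zsmul_one, Pi.single_smul]
        exact AddSubgroup.zsmul_mem _ hgen z
  simp [hpi, AddSubgroup.mem_pi]

theorem spanE_mono {h h' : ℕ} (hh : h ≤ h') : spanE p n h ≤ spanE p n h' :=
  AddSubgroup.closure_mono fun _ ⟨j, hj, hx⟩ => ⟨j, by omega, hx⟩

theorem exists_apply_ne_zero_of_not_mem_spanE {J : ℕ} {x : Fin n → ZMod p}
    (hx : x ∈ spanE p n (J + 1)) (hx' : x ∉ spanE p n J) :
    ∃ j : Fin n, (j : ℕ) = J ∧ x j ≠ 0 := by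
  by_contra! H
  refine hx' (mem_spanE.2 fun l hl => ?_)
  rcases hl.eq_or_lt with hl | hl
  · exact H l hl.symm
  · exact mem_spanE.1 hx l hl

theorem mem_vadd_spanE_iff {h : ℕ} {g x : Fin n → ZMod p} :
    x ∈ g +ᵥ (spanE p n h : Set (Fin n → ZMod p)) ↔ x - g ∈ spanE p n h := by
  rw [mem_leftAddCoset_iff, neg_add_eq_sub, SetLike.mem_coe]

theorem mem_nsmul_single_vadd_spanE_iff {h : ℕ} {j₀ : Fin n} (hj₀ : (j₀ : ℕ) = h) {k : ℕ}
    {x : Fin n → ZMod p} :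
    x ∈ k • (Pi.single j₀ 1 : Fin n → ZMod p) +ᵥ (spanE p n h : Set (Fin n → ZMod p)) ↔
      x ∈ spanE p n (h + 1) ∧ x j₀ = k := by
  simp only [mem_vadd_spanE_iff, mem_spanE, Pi.sub_apply, Pi.smul_apply]
  constructor
  · intro hx
    refine ⟨fun l hl => ?_, by simpa [sub_eq_zero] using hx j₀ hj₀.ge⟩
    simpa [Pi.single_eq_of_ne (show l ≠ j₀ by omega)] using hx l (by omega)
  · rintro ⟨hx, hx₀⟩ l hl
    rcases hl.eq_or_lt with hl | hl
    · obtain rfl : l = j₀ := Fin.ext (by omega)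
      simp [hx₀]
    · simp [hx l hl, Pi.single_eq_of_ne (show l ≠ j₀ by omega)]

theorem mem_line_self (v u : Fin n → ZMod p) : u ∈ line v u := ⟨0, by simp⟩

theorem line_eq_of_mem {v u x : Fin n → ZMod p} (hx : x ∈ line v u) : line v x = line v u := by
  obtain ⟨k, rfl⟩ := hx
  ext y
  constructor
  · rintro ⟨l, rfl⟩; exact ⟨k + l, by module⟩
  · rintro ⟨l, rfl⟩; exact ⟨l - k, by module⟩

def lineBelow (v x : Fin n → ZMod p) : Set (Fin n → ZMod p) :=
  {y | y ∈ line v x ∧ lexLt y x}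

theorem mem_comp_iff {v x : Fin n → ZMod p} {A : Set (Fin n → ZMod p)} :
    x ∈ comp v A ↔ (lineBelow v x).ncard < (A ∩ line v x).ncard := by
  simp only [comp, IS, Set.mem_iUnion, Set.mem_ofPred_eq]
  constructor
  · rintro ⟨u, hxu, hlt⟩
    rwa [← line_eq_of_mem hxu] at hlt
  · exact fun hlt => ⟨x, mem_line_self v x, hlt⟩

theorem mem_of_lineBelow_subset [NeZero p] {v x y : Fin n → ZMod p} {A : Set (Fin n → ZMod p)}
    (hc : comp v A = A) (hx : x ∈ A) (hy : y ∈ line v x)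
    (hsub : lineBelow v y ⊆ lineBelow v x) : y ∈ A := by
  rw [← hc, mem_comp_iff] at hx ⊢
  rw [line_eq_of_mem hy]
  exact (Set.ncard_le_ncard hsub (Set.toFinite _)).trans_lt hx

section LeadingCoordinate

variable {j : Fin n} {v : Fin n → ZMod p} (hvj : v j = 1) (hv : ∀ l, j < l → v l = 0)
include hvj hv

theorem lexLt_iff_val_lt {x y : Fin n → ZMod p} (hy : y ∈ line v x) :
    lexLt y x ↔ (y j).val < (x j).val := by
  obtain ⟨k, rfl⟩ := hy
  constructor
  · rintro ⟨i, hlt, hup⟩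
    rcases lt_trichotomy i j with hij | rfl | hij
    · have hk : k = 0 := by simpa [hvj] using hup j hij
      simp [hk] at hlt
    · exact hlt
    · simp [hv i hij] at hlt
  · exact fun hlt => ⟨j, hlt, fun l hl => by simp [hv l hl]⟩

theorem lineBelow_eq (x : Fin n → ZMod p) :
    lineBelow v x = {y | y ∈ line v x ∧ (y j).val < (x j).val} := by
  ext y
  exact and_congr_right (lexLt_iff_val_lt hvj hv)

end LeadingCoordinate

theorem stdE_subset_comp [Fact (1 < p)] {A : Set (Fin n → ZMod p)} (hE : stdE n p ⊆ A)
    {j : Fin n} {u : Fin n → ZMod p} (hu : u ∈ A) (hu' : u ∈ spanE p n j) :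
    stdE n p ⊆ comp (Pi.single j 1 - u) A := by
  set v := Pi.single j 1 - u
  have huj : u j = 0 := mem_spanE.1 hu' j le_rfl
  have hvj : v j = 1 := by simp [v, huj]
  have hv : ∀ l, j < l → v l = 0 := fun l hl => by
    simp [v, mem_spanE.1 hu' l hl.le, Pi.single_eq_of_ne hl.ne']
  intro g hg
  rw [mem_comp_iff, lineBelow_eq hvj hv]
  by_cases hgj : g j = 0
  · simp only [hgj, ZMod.val_zero, Nat.not_lt_zero, and_false, Set.ofPred_false,
      Set.ncard_empty]
    exact (Set.ncard_pos (Set.toFinite _)).2 ⟨g, hE hg, mem_line_self v g⟩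
  have hg_single : g = Pi.single j 1 := by
    rcases hg with rfl | ⟨i, rfl⟩
    · simp at hgj
    · obtain rfl : i = j := by
        by_contra hij
        exact hgj (Pi.single_eq_of_ne (Ne.symm hij) 1)
      rfl
  have hu_line : u ∈ line v g := ⟨-1, by simp [v, hg_single]⟩
  have hbelow : {y | y ∈ line v g ∧ (y j).val < (g j).val} ⊆ {u} := by
    rintro _ ⟨⟨k, rfl⟩, hlt⟩
    have hk : 1 + k = 0 := by simpa [hvj, hg_single, ZMod.val_one] using hlt
    rw [Set.mem_singleton_iff, eq_neg_of_add_eq_zero_right hk]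
    simp [v, hg_single]
  have hpair : {g, u} ⊆ A ∩ line v g :=
    Set.pair_subset ⟨hE hg, mem_line_self v g⟩ ⟨hu, hu_line⟩
  calc _ ≤ ({u} : Set (Fin n → ZMod p)).ncard := Set.ncard_le_ncard hbelow
    _ < ({g, u} : Set (Fin n → ZMod p)).ncard := by
      rw [Set.ncard_singleton, Set.ncard_pair fun (h : g = u) => hgj (h ▸ huj)]
      norm_num
    _ ≤ _ := Set.ncard_le_ncard hpair (Set.toFinite _)

namespace ECompressed

section

variable [Fact (1 < p)] {A : Set (Fin n → ZMod p)} (hA : ECompressed A) {j : Fin n}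
include hA

theorem add_smul_sub_single_mem {u x : Fin n → ZMod p} (hu : u ∈ A) (hu' : u ∈ spanE p n j)
    (hx : x ∈ A) {s : ℕ} (hs : s ≤ (x j).val) :
    x + (s : ZMod p) • (u - Pi.single j 1) ∈ A := by
  set v := Pi.single j 1 - u
  have huj : u j = 0 := mem_spanE.1 hu' j le_rfl
  have hvj : v j = 1 := by simp [v, huj]
  have hv : ∀ l, j < l → v l = 0 := fun l hl => by
    simp [v, mem_spanE.1 hu' l hl.le, Pi.single_eq_of_ne hl.ne']
  have hc : comp v A = A :=
    hA.2 v (fun h => by simp [h] at hvj) (stdE_subset_comp hA.1 hu hu')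
  have hyj : ((x + (-(s : ZMod p)) • v) j).val ≤ (x j).val := by
    have hsp : s < p := hs.trans_lt (ZMod.val_lt _)
    rw [Pi.add_apply, Pi.smul_apply, hvj, smul_eq_mul, mul_one, ← sub_eq_add_neg,
      ZMod.val_sub (by rwa [ZMod.val_cast_of_lt hsp])]
    exact Nat.sub_le _ _
  rw [show (s : ZMod p) • (u - Pi.single j 1) = (-(s : ZMod p)) • v by
    rw [neg_smul, ← smul_neg, neg_sub]]
  refine mem_of_lineBelow_subset hc hx ⟨_, rfl⟩ ?_
  rw [lineBelow_eq hvj hv, lineBelow_eq hvj hv, line_eq_of_mem ⟨_, rfl⟩]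
  exact fun y ⟨hy, hlt⟩ => ⟨hy, hlt.trans_le hyj⟩

theorem sub_nsmul_single_mem {x : Fin n → ZMod p} (hx : x ∈ A) {s : ℕ}
    (hs : s ≤ (x j).val) : x - s • Pi.single j 1 ∈ A := by
  have := hA.add_smul_sub_single_mem (hA.1 (Set.mem_union_left _ rfl)) (zero_mem _) hx hs
  rwa [zero_sub, smul_neg, Nat.cast_smul_eq_nsmul, ← sub_eq_add_neg] at this

theorem add_sub_single_mem {u x : Fin n → ZMod p} (hx : x ∈ A) (hxj : x j ≠ 0) (hu : u ∈ A)
    (hu' : u ∈ spanE p n j) : x + u - Pi.single j 1 ∈ A := by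
  have hs : 1 ≤ (x j).val := Nat.one_le_iff_ne_zero.2 ((ZMod.val_eq_zero _).not.2 hxj)
  simpa [add_sub_assoc] using hA.add_smul_sub_single_mem hu hu' hx hs

theorem nsmul_single_vadd_spanE_subset {h : ℕ} (hH : (spanE p n h : Set (Fin n → ZMod p)) ⊆ A)
    {j₀ : Fin n} (hj₀ : (j₀ : ℕ) = h) {q : ℕ} (hq : q < p) {w : Fin n → ZMod p} (hw : w ∈ A)
    (hwq : w ∈ q • (Pi.single j₀ 1 : Fin n → ZMod p) +ᵥ (spanE p n h : Set (Fin n → ZMod p)))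
    {k : ℕ} (hk : k < q) :
    k • (Pi.single j₀ 1 : Fin n → ZMod p) +ᵥ (spanE p n h : Set (Fin n → ZMod p)) ⊆ A := by
  intro z hz
  obtain ⟨d, rfl⟩ : ∃ d, q = k + 1 + d := ⟨q - (k + 1), by omega⟩
  have hwj : w j₀ = ((k + 1 + d : ℕ) : ZMod p) :=
    ((mem_nsmul_single_vadd_spanE_iff hj₀).1 hwq).2
  have hw' : w - d • Pi.single j₀ 1 ∈ A :=
    hA.sub_nsmul_single_mem hw (by rw [hwj, ZMod.val_cast_of_lt hq]; omega)
  have hw'j : (w - d • Pi.single j₀ 1 : Fin n → ZMod p) j₀ ≠ 0 := by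
    have : (w - d • Pi.single j₀ 1 : Fin n → ZMod p) j₀ = ((k + 1 : ℕ) : ZMod p) := by
      simp only [Pi.sub_apply, Pi.smul_apply, Pi.single_eq_same, nsmul_one, hwj]
      push_cast
      ring
    rw [this, Ne, ZMod.natCast_eq_zero_iff]
    exact Nat.not_dvd_of_pos_of_lt (by omega) (by omega)
  have hu : z - (w - d • Pi.single j₀ 1) + Pi.single j₀ 1 ∈ spanE p n h := by
    rw [mem_vadd_spanE_iff] at hz hwq
    convert sub_mem hz hwq using 1
    rw [add_nsmul, add_nsmul, one_nsmul]
    abel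
  convert hA.add_sub_single_mem hw' hw'j (hH hu) (hj₀ ▸ hu) using 1
  abel

end

section

variable [Fact p.Prime] {A : Set (Fin n → ZMod p)} (hA : ECompressed A) {h : ℕ}
  (hH : (spanE p n h : Set (Fin n → ZMod p)) ⊆ A)
  (hS : ¬(spanE p n (h + 1) : Set (Fin n → ZMod p)) ⊆ A) {j₀ : Fin n} (hj₀ : (j₀ : ℕ) = h)
include hA hH hS hj₀

theorem single_add_not_mem {j : Fin n} (hj : h < j) {y : Fin n → ZMod p}
    (hy : y ∈ spanE p n (h + 1)) (hy₀ : y j₀ ≠ 0) : Pi.single j 1 + y ∉ A := by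
  intro hX
  have hXj : (Pi.single j 1 + y : Fin n → ZMod p) j ≠ 0 := by simp [mem_spanE.1 hy j (by omega)]
  have htrans : ∀ u ∈ A, u ∈ spanE p n (h + 1) → u + y ∈ A := fun u hu hu' => by
    have := hA.add_sub_single_mem hX hXj hu (spanE_mono (by omega) hu')
    rwa [add_right_comm, add_assoc, add_sub_cancel_left] at this
  have hmul : ∀ k : ℕ, ∀ t ∈ spanE p n h, t + k • y ∈ A := by
    intro k
    induction k with
    | zero => intro t ht; simpa using hH ht
    | succ k ih =>
      intro t ht
      rw [succ_nsmul, ← add_assoc]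
      exact htrans _ (ih t ht) (add_mem (spanE_mono (Nat.le_succ h) ht) (nsmul_mem hy k))
  refine hS fun z hz => ?_
  -- `y` has a unit `(h+1)`-st coordinate, so `z ≡ k • y` modulo `H` for this `k`
  set k := (z j₀ / y j₀).val
  have hzk : z - k • y ∈ spanE p n h := mem_spanE.2 fun l hl => by
    rcases hl.eq_or_lt with hl | hl
    · obtain rfl : l = j₀ := Fin.ext (by omega)
      rw [Pi.sub_apply, Pi.smul_apply, nsmul_eq_mul, ZMod.natCast_zmod_val,
        div_mul_cancel₀ _ hy₀, sub_self]
    · simp [mem_spanE.1 hz l hl, mem_spanE.1 hy l hl]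
  simpa using hmul k _ hzk

theorem mem_spanE_of_single_add_mem {j : Fin n} (hj : h < j) {r : Fin n → ZMod p}
    (hr : r ∈ spanE p n (h + 1)) (hrA : Pi.single j 1 + r ∈ A) : r ∈ spanE p n h := by
  by_contra hrH
  refine hA.single_add_not_mem hH hS hj₀ hj hr (fun hr₀ => hrH ?_) hrA
  refine mem_spanE.2 fun l hl => hl.eq_or_lt.elim (fun e => ?_) (mem_spanE.1 hr l)
  rwa [show l = j₀ from Fin.ext (by omega)]

theorem single_add_single_add_not_mem {j j' : Fin n} (hj : h < j) (hj' : h < j')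
    {t : Fin n → ZMod p} (ht : t ∈ spanE p n h)
    (hjj' : (Pi.single j 1 + Pi.single j' 1 : Fin n → ZMod p) j' ≠ 0) :
    Pi.single j 1 + Pi.single j' 1 + t ∉ A := by
  intro hX
  have hXj' : (Pi.single j 1 + Pi.single j' 1 + t : Fin n → ZMod p) j' ≠ 0 := by
    rwa [Pi.add_apply _ t, mem_spanE.1 ht j' hj'.le, add_zero]
  have he₀ : Pi.single j₀ 1 ∈ A := hA.1 (Set.mem_union_right _ ⟨j₀, rfl⟩)
  have he₀S : (Pi.single j₀ 1 : Fin n → ZMod p) ∈ spanE p n (h + 1) :=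
    AddSubgroup.subset_closure ⟨j₀, by omega, rfl⟩
  have := hA.add_sub_single_mem hX hXj' he₀ (spanE_mono (by omega) he₀S)
  refine hA.single_add_not_mem hH hS hj₀ hj (y := t + Pi.single j₀ 1)
    (add_mem (spanE_mono (Nat.le_succ h) ht) he₀S) (by simp [mem_spanE.1 ht j₀ hj₀.ge]) ?_
  convert this using 1
  abel

theorem exists_sub_single_mem_spanE {x : Fin n → ZMod p} (hx : x ∈ A)
    (hxS : x ∉ spanE p n (h + 1)) :
    ∃ j : Fin n, h < j ∧ x - Pi.single j 1 ∈ spanE p n h := by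
  suffices key : ∀ J : ℕ, ∀ x ∈ A, x ∈ spanE p n J → x ∉ spanE p n (h + 1) →
      ∃ j : Fin n, h < j ∧ x - Pi.single j 1 ∈ spanE p n h from
    key n x hx (mem_spanE.2 fun l hl => absurd l.isLt (by omega)) hxS
  intro J
  induction J with
  | zero => exact fun x _ hx hxS => absurd (spanE_mono (Nat.zero_le _) hx) hxS
  | succ J ih =>
  intro x hx hxJ hxS
  by_cases hxJ' : x ∈ spanE p n J
  · exact ih x hx hxJ' hxS
  obtain ⟨j, rfl, hxj⟩ := exists_apply_ne_zero_of_not_mem_spanE hxJ hxJ'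
  have hjh : h < j := by
    by_contra hjh
    exact hxS (spanE_mono (by omega) hxJ)
  obtain ⟨c, hc⟩ : ∃ c, (x j).val = c + 1 :=
    Nat.exists_eq_add_one.2 (Nat.pos_of_ne_zero ((ZMod.val_eq_zero _).not.2 hxj))
  set r := x - (c + 1) • Pi.single j 1 with hr_def
  have hrj : r ∈ spanE p n j := mem_spanE.2 fun l hl => by
    rcases hl.eq_or_lt with hl | hl
    · obtain rfl : l = j := Fin.ext hl.symm
      rw [hr_def, Pi.sub_apply, Pi.smul_apply, Pi.single_eq_same, nsmul_one, ← hc,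
        ZMod.natCast_zmod_val, sub_self]
    · simp [r, mem_spanE.1 hxJ l hl, Pi.single_eq_of_ne (Fin.ne_of_gt hl)]
  have hx₁ : Pi.single j 1 + r ∈ A := by
    convert hA.sub_nsmul_single_mem hx (j := j) (s := c) (by omega) using 1
    rw [hr_def, succ_nsmul]
    abel
  have hrH : r ∈ spanE p n h := by
    by_cases hrS : r ∈ spanE p n (h + 1)
    · exact hA.mem_spanE_of_single_add_mem hH hS hj₀ hjh hrS hx₁
    obtain ⟨j', hj', hrj'⟩ := ih r (hA.sub_nsmul_single_mem hx hc.ge) hrj hrS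
    have hrj'_one : r j' = 1 := by simpa [sub_eq_zero] using mem_spanE.1 hrj' j' hj'.le
    have hj'j : j ≠ j' := fun e => by simp [← e, mem_spanE.1 hrj j le_rfl] at hrj'_one
    refine absurd ?_ (hA.single_add_single_add_not_mem hH hS hj₀ hjh hj' hrj'
      (by simp [Pi.single_eq_of_ne hj'j.symm]))
    convert hx₁ using 1
    abel
  refine ⟨j, hjh, ?_⟩
  rcases Nat.eq_zero_or_pos c with rfl | hc0
  · simpa [r] using hrH
  have h2 : (2 : ZMod p) ≠ 0 := by
    have h2p : 2 < p := by have := ZMod.val_lt (x j); omega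
    exact_mod_cast (ZMod.natCast_eq_zero_iff 2 p).not.2 (Nat.not_dvd_of_pos_of_lt two_pos h2p)
  refine absurd ?_ (hA.single_add_single_add_not_mem hH hS hj₀ hjh hjh hrH
    (by simpa [one_add_one_eq_two] using h2))
  convert hA.sub_nsmul_single_mem hx (j := j) (s := c - 1) (by omega) using 1
  rw [hr_def, show c + 1 = c - 1 + 2 by omega, add_nsmul, two_nsmul]
  abel

end

end ECompressed

end

theorem statement10 (p n : ℕ) (hp : p.Prime)
    (A : Set (Fin n → ZMod p)) (hA : ECompressed A)
    (h : ℕ) (hhA : (spanE p n h : Set (Fin n → ZMod p)) ⊆ A)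
    (hhmax : ∀ k : ℕ, (spanE p n k : Set (Fin n → ZMod p)) ⊆ A → k ≤ h)
    (m : ℕ) (hm : m = n - h) (hm1 : 1 ≤ m)
    (a : Fin m → (Fin n → ZMod p))
    (ha : ∀ i : Fin m,
      a i = Pi.single (⟨h + (i : ℕ), by have := i.isLt; omega⟩ : Fin n) 1)
    (q : ℕ) (hq2 : q ≤ p - 1)
    (hqne : (A ∩ (q • a ⟨0, hm1⟩ +ᵥ (spanE p n h : Set (Fin n → ZMod p)))).Nonempty)
    (hqmax : ∀ q' : ℕ, q' ≤ p - 1 →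
      (A ∩ (q' • a ⟨0, hm1⟩ +ᵥ (spanE p n h : Set (Fin n → ZMod p)))).Nonempty →
      q' ≤ q) :
    A = (⋃ i ∈ Set.Iio q, (i • a ⟨0, hm1⟩ +ᵥ (spanE p n h : Set (Fin n → ZMod p))))
      ∪ (A ∩ (q • a ⟨0, hm1⟩ +ᵥ (spanE p n h : Set (Fin n → ZMod p))))
      ∪ (⋃ i : Fin m, ⋃ (_ : (i : ℕ) ≠ 0),
          A ∩ (a i +ᵥ (spanE p n h : Set (Fin n → ZMod p)))) := by
  have : Fact p.Prime := ⟨hp⟩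
  set j₀ : Fin n := ⟨h, by omega⟩
  have ha₀ : a ⟨0, hm1⟩ = Pi.single j₀ 1 := ha _
  have hS : ¬(spanE p n (h + 1) : Set (Fin n → ZMod p)) ⊆ A := fun hS => by
    have := hhmax _ hS
    omega
  rw [ha₀] at hqne hqmax ⊢
  obtain ⟨w, hwA, hw⟩ := hqne
  ext x
  constructor
  · intro hx
    by_cases hxS : x ∈ spanE p n (h + 1)
    · have hxc : x ∈ (x j₀).val • (Pi.single j₀ 1 : Fin n → ZMod p) +ᵥ
          (spanE p n h : Set (Fin n → ZMod p)) :=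
        (mem_nsmul_single_vadd_spanE_iff rfl).2 ⟨hxS, (ZMod.natCast_zmod_val _).symm⟩
      rcases (hqmax _ (by have := ZMod.val_lt (x j₀); omega) ⟨x, hx, hxc⟩).lt_or_eq
        with hlt | heq
      · exact Or.inl (Or.inl (Set.mem_biUnion hlt hxc))
      · exact Or.inl (Or.inr ⟨hx, heq ▸ hxc⟩)
    · obtain ⟨j, hj, hxj⟩ := hA.exists_sub_single_mem_spanE hhA hS (j₀ := j₀) rfl hx hxS
      refine Or.inr (Set.mem_iUnion₂.2 ⟨⟨j - h, by omega⟩, by simp; omega, hx, ?_⟩)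
      rw [ha, mem_vadd_spanE_iff]
      convert hxj using 4
      simp
      omega
  · rintro ((hx | hx) | hx)
    · obtain ⟨k, hk, hxk⟩ := Set.mem_iUnion₂.1 hx
      exact hA.nsmul_single_vadd_spanE_subset hhA rfl (Nat.lt_of_le_sub_one hp.pos hq2) hwA hw hk
        hxk
    · exact hx.1
    · obtain ⟨_, _, hx⟩ := Set.mem_iUnion₂.1 hx
      exact hx.1
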